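/- Under the same assumptions, the vorticity satisfies the differential inequality d/dt ‖ω‖₂² + (2/Re) ‖∇_h ω‖₂² + ε² ‖u_z‖₂² ≤ (1/ε²) ‖∇_h w‖₂² for all t, where ω = ∇_h × u and u_z = ∂_z u. -/

import Mathlib

open MeasureTheory Set

noncomputable section

/-- The periodic box Ω = [0,L]² × [0,1]. -/
def Box (L : ℝ) : Set (ℝ × ℝ × ℝ) := Icc 0 L ×ˢ Icc 0 L ×ˢ Icc 0 1

/-- The horizontal square [0,L]². -/
def Sq (L : ℝ) : Set (ℝ × ℝ) := Icc 0 L ×ˢ Icc 0 L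

/-- Partial derivative in x. -/
def pdx (f : ℝ × ℝ × ℝ → ℝ) (p : ℝ × ℝ × ℝ) : ℝ := fderiv ℝ f p (1, 0, 0)
/-- Partial derivative in y. -/
def pdy (f : ℝ × ℝ × ℝ → ℝ) (p : ℝ × ℝ × ℝ) : ℝ := fderiv ℝ f p (0, 1, 0)
/-- Partial derivative in z. -/
def pdz (f : ℝ × ℝ × ℝ → ℝ) (p : ℝ × ℝ × ℝ) : ℝ := fderiv ℝ f p (0, 0, 1)

/-- Periodicity: period L in x and y, period 1 in z. -/
def Per (L : ℝ) (f : ℝ × ℝ × ℝ → ℝ) : Prop :=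
  (∀ x y z : ℝ, f (x + L, y, z) = f (x, y, z)) ∧
  (∀ x y z : ℝ, f (x, y + L, z) = f (x, y, z)) ∧
  (∀ x y z : ℝ, f (x, y, z + 1) = f (x, y, z))

/-- The L²(Ω) norm. -/
def nL2 (L : ℝ) (f : ℝ × ℝ × ℝ → ℝ) : ℝ := (∫ p in Box L, (f p) ^ 2) ^ ((1 : ℝ) / 2)

/-- The L² norm of the horizontal gradient ∇_h f. -/
def nGH (L : ℝ) (f : ℝ × ℝ × ℝ → ℝ) : ℝ :=
  (∫ p in Box L, (pdx f p) ^ 2 + (pdy f p) ^ 2) ^ ((1 : ℝ) / 2)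

/-- Vertical vorticity ω = ∂_x u₂ − ∂_y u₁ at time t. -/
def omg (u1 u2 : ℝ → ℝ × ℝ × ℝ → ℝ) (t : ℝ) (q : ℝ × ℝ × ℝ) : ℝ :=
  pdx (u2 t) q - pdy (u1 t) q

/-- A smooth periodic solution of the viscous Hasegawa–Mima system
∂_t w + u·∇_h w − ψ_z = (1/Re) Δ_h w,
∂_t ω + u·∇_h ω − w_z = (1/Re) Δ_h ω + ε² ψ_zz,
∇_h · u = 0, ω = ∇_h × u, ψ = (−Δ_h)⁻¹ ω of zero horizontal mean, u = (ψ_y, −ψ_x). -/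
def IsSol (L Re ε : ℝ) (u1 u2 w ψ : ℝ → ℝ × ℝ × ℝ → ℝ) : Prop :=
  ContDiff ℝ (⊤ : ℕ∞) (Function.uncurry u1) ∧ ContDiff ℝ (⊤ : ℕ∞) (Function.uncurry u2) ∧
  ContDiff ℝ (⊤ : ℕ∞) (Function.uncurry w) ∧ ContDiff ℝ (⊤ : ℕ∞) (Function.uncurry ψ) ∧
  (∀ t, Per L (u1 t) ∧ Per L (u2 t) ∧ Per L (w t) ∧ Per L (ψ t)) ∧
  (∀ t p, pdx (u1 t) p + pdy (u2 t) p = 0) ∧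
  (∀ t p, u1 t p = pdy (ψ t) p) ∧
  (∀ t p, u2 t p = -(pdx (ψ t) p)) ∧
  (∀ t z, (∫ q in Sq L, ψ t (q.1, q.2, z)) = 0) ∧
  (∀ t p, deriv (fun s => w s p) t
      + (u1 t p * pdx (w t) p + u2 t p * pdy (w t) p) - pdz (ψ t) p
      = (1 / Re) * (pdx (pdx (w t)) p + pdy (pdy (w t)) p)) ∧
  (∀ t p, deriv (fun s => omg u1 u2 s p) t
      + (u1 t p * pdx (omg u1 u2 t) p + u2 t p * pdy (omg u1 u2 t) p) - pdz (w t) p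
      = (1 / Re) * (pdx (pdx (omg u1 u2 t)) p + pdy (pdy (omg u1 u2 t)) p)
        + ε ^ 2 * pdz (pdz (ψ t)) p)

namespace HM13

abbrev E3 := ℝ × ℝ × ℝ

/-- Generic directional partial derivative. -/
def pd (v : E3) (f : E3 → ℝ) (p : E3) : ℝ := fderiv ℝ f p v

lemma pdx_eq (f : E3 → ℝ) : pdx f = pd (1,0,0) f := rfl
lemma pdy_eq (f : E3 → ℝ) : pdy f = pd (0,1,0) f := rfl
lemma pdz_eq (f : E3 → ℝ) : pdz f = pd (0,0,1) f := rfl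

lemma per_sub {L : ℝ} {f g : E3 → ℝ} (hf : Per L f) (hg : Per L g) :
    Per L (fun p => f p - g p) :=
  ⟨fun x y z => by simp only [hf.1, hg.1], fun x y z => by simp only [hf.2.1, hg.2.1],
   fun x y z => by simp only [hf.2.2, hg.2.2]⟩

lemma pd_contDiff {f : E3 → ℝ} (hf : ContDiff ℝ (⊤ : ℕ∞) f) (v : E3) :
    ContDiff ℝ (⊤ : ℕ∞) (pd v f) :=
  (hf.fderiv_right (by simp)).clm_apply contDiff_const

lemma fderiv_shift {f : E3 → ℝ} (hf : Differentiable ℝ f) (c : E3)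
    (hper : ∀ q, f (q + c) = f q) (q : E3) :
    fderiv ℝ f (q + c) = fderiv ℝ f q := by
  have h1 : HasFDerivAt (fun p => f (p + c)) (fderiv ℝ f (q + c)) q := by
    have := (hf (q + c)).hasFDerivAt.comp q ((hasFDerivAt_id q).add_const c)
    simpa [Function.comp_def] using this
  have h : f = fun p => f (p + c) := by funext p; rw [hper]
  conv_rhs => rw [h]
  exact (h1.fderiv).symm

lemma pd_mul {f g : E3 → ℝ} (hf : Differentiable ℝ f) (hg : Differentiable ℝ g)
    (v : E3) (p : E3) :
    pd v (fun q => f q * g q) p = f p * pd v g p + g p * pd v f p := by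
  unfold pd
  rw [fderiv_fun_mul (hf p) (hg p)]
  simp

lemma pd_neg {g : E3 → ℝ} (v : E3) (p : E3) :
    pd v (fun q => -(g q)) p = -(pd v g p) := by
  unfold pd
  rw [fderiv_fun_neg]
  simp

lemma pd_comm {f : E3 → ℝ} (hf : ContDiff ℝ (⊤ : ℕ∞) f) (v w : E3) (p : E3) :
    pd v (pd w f) p = pd w (pd v f) p := by
  have hdf : Differentiable ℝ (fderiv ℝ f) :=
    (hf.fderiv_right (m := (⊤ : ℕ∞)) (by simp)).differentiable (by simp)
  have key : ∀ a b : E3,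
      pd a (pd b f) p = fderiv ℝ (fderiv ℝ f) p a b := by
    intro a b
    unfold pd
    have h2 : (fun q => fderiv ℝ f q b) = fun q => (fderiv ℝ f q) ((fun _ => b) q) := rfl
    rw [h2, fderiv_clm_apply (hdf p) (differentiableAt_const b)]
    simp
  rw [key, key]
  exact second_derivative_symmetric
    (fun y => (hf.differentiable (by simp) y).hasFDerivAt)
    ((hdf p).hasFDerivAt) v w

-- Periodicity lemmas
lemma per_mul {L : ℝ} {f g : E3 → ℝ} (hf : Per L f) (hg : Per L g) :
    Per L (fun p => f p * g p) :=
  ⟨fun x y z => by simp only [hf.1, hg.1], fun x y z => by simp only [hf.2.1, hg.2.1],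
   fun x y z => by simp only [hf.2.2, hg.2.2]⟩

lemma per_pd {L : ℝ} {f : E3 → ℝ} (hf : Differentiable ℝ f) (hp : Per L f) (v : E3) :
    Per L (pd v f) := by
  refine ⟨fun x y z => ?_, fun x y z => ?_, fun x y z => ?_⟩
  · have h : ((x, y, z) : E3) + (L, 0, 0) = (x + L, y, z) := by simp [Prod.ext_iff]
    unfold pd
    rw [← h, fderiv_shift hf _ (fun q => by
      obtain ⟨a, b, c⟩ := q
      simpa [Prod.ext_iff] using hp.1 a b c)]
  · have h : ((x, y, z) : E3) + (0, L, 0) = (x, y + L, z) := by simp [Prod.ext_iff]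
    unfold pd
    rw [← h, fderiv_shift hf _ (fun q => by
      obtain ⟨a, b, c⟩ := q
      simpa [Prod.ext_iff] using hp.2.1 a b c)]
  · have h : ((x, y, z) : E3) + (0, 0, 1) = (x, y, z + 1) := by simp [Prod.ext_iff]
    unfold pd
    rw [← h, fderiv_shift hf _ (fun q => by
      obtain ⟨a, b, c⟩ := q
      simpa [Prod.ext_iff] using hp.2.2 a b c)]

-- Box facts
lemma boxCompact {L : ℝ} : IsCompact (Box L) :=
  isCompact_Icc.prod (isCompact_Icc.prod isCompact_Icc)
lemma boxMeas {L : ℝ} : MeasurableSet (Box L) :=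
  measurableSet_Icc.prod (measurableSet_Icc.prod measurableSet_Icc)
lemma cont_integrableOn {L : ℝ} {h : E3 → ℝ} (hc : Continuous h) :
    IntegrableOn h (Box L) :=
  hc.continuousOn.integrableOn_compact boxCompact

-- FTC on an interval with periodic endpoints
lemma ftc_zero {f g : ℝ → ℝ} {a : ℝ} (ha : 0 < a)
    (hder : ∀ x, HasDerivAt f (g x) x) (hcont : Continuous g) (hper : f a = f 0) :
    ∫ x in Icc 0 a, g x = 0 := by
  rw [integral_Icc_eq_integral_Ioc, ← intervalIntegral.integral_of_le ha.le,
    intervalIntegral.integral_eq_sub_of_hasDerivAt (fun x _ => hder x)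
      (hcont.intervalIntegrable 0 a), hper, sub_self]

lemma integral_prod_zero {β : Type*} [MeasurableSpace β] {ν : Measure β} [SFinite ν]
    {s : Set ℝ} {T : Set β} (g : ℝ × β → ℝ)
    (hg : IntegrableOn g (s ×ˢ T) ((volume : Measure ℝ).prod ν))
    (hzero : ∀ b, ∫ x in s, g (x, b) = 0) :
    ∫ q in s ×ˢ T, g q ∂((volume : Measure ℝ).prod ν) = 0 := by
  unfold IntegrableOn at hg
  rw [← Measure.prod_restrict] at hg
  rw [← Measure.prod_restrict, integral_prod_symm g hg]
  simp only [hzero, integral_zero]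

lemma integral_pdx_zero {L : ℝ} (hL : 0 < L) {f : E3 → ℝ}
    (hf : ContDiff ℝ (⊤ : ℕ∞) f) (hp : Per L f) : ∫ p in Box L, pd (1,0,0) f p = 0 := by
  have hcont : Continuous (pd ((1:ℝ),(0:ℝ),(0:ℝ)) f) := (pd_contDiff hf (1,0,0)).continuous
  have hzero : ∀ b : ℝ × ℝ, ∫ x in Icc (0:ℝ) L, pd (1,0,0) f (x, b) = 0 := by
    intro b
    refine ftc_zero hL (f := fun x => f (x, b)) (fun x => ?_)
      (hcont.comp (continuous_id.prodMk continuous_const)) ?_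
    · have h1 : HasDerivAt (fun x : ℝ => ((x, b) : E3)) (1, 0, 0) x :=
        (hasDerivAt_id x).prodMk (hasDerivAt_const x b)
      exact (hf.differentiable (by simp) (x, b)).hasFDerivAt.comp_hasDerivAt x h1
    · simpa using hp.1 0 b.1 b.2
  rw [Box, Measure.volume_eq_prod ℝ (ℝ × ℝ)]
  refine integral_prod_zero (pd (1,0,0) f) ?_ hzero
  rw [← Measure.volume_eq_prod]
  exact cont_integrableOn (L := L) hcont

lemma integral_pdy_zero {L : ℝ} (hL : 0 < L) {f : E3 → ℝ}
    (hf : ContDiff ℝ (⊤ : ℕ∞) f) (hp : Per L f) : ∫ p in Box L, pd (0,1,0) f p = 0 := by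
  have hcont : Continuous (pd ((0:ℝ),(1:ℝ),(0:ℝ)) f) := (pd_contDiff hf (0,1,0)).continuous
  have hinner : ∀ x : ℝ, (∫ yz in Icc (0:ℝ) L ×ˢ Icc (0:ℝ) 1, pd (0,1,0) f (x, yz)) = 0 := by
    intro x
    have hzero : ∀ z : ℝ, ∫ y in Icc (0:ℝ) L, pd (0,1,0) f (x, y, z) = 0 := by
      intro z
      refine ftc_zero hL (f := fun y => f (x, y, z)) (fun y => ?_)
        (hcont.comp (continuous_const.prodMk
          (continuous_id.prodMk continuous_const))) ?_
      · have h1 : HasDerivAt (fun y : ℝ => ((x, y, z) : E3)) (0, 1, 0) y :=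
          (hasDerivAt_const y x).prodMk ((hasDerivAt_id y).prodMk (hasDerivAt_const y z))
        exact (hf.differentiable (by simp) (x, y, z)).hasFDerivAt.comp_hasDerivAt y h1
      · simpa using hp.2.1 x 0 z
    rw [Measure.volume_eq_prod ℝ ℝ]
    refine integral_prod_zero (fun yz => pd (0,1,0) f (x, yz)) ?_ hzero
    rw [← Measure.volume_eq_prod]
    exact ((hcont.comp (continuous_const.prodMk continuous_id)).continuousOn).integrableOn_compact
      (isCompact_Icc.prod isCompact_Icc)
  have hint : IntegrableOn (pd ((0:ℝ),(1:ℝ),(0:ℝ)) f) (Box L) := cont_integrableOn hcont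
  rw [Box] at hint ⊢
  rw [Measure.volume_eq_prod ℝ (ℝ × ℝ)]
  rw [setIntegral_prod _ (by rw [← Measure.volume_eq_prod]; exact hint)]
  simp only [hinner, integral_zero]

lemma integral_pdz_zero {L : ℝ} {f : E3 → ℝ}
    (hf : ContDiff ℝ (⊤ : ℕ∞) f) (hp : Per L f) : ∫ p in Box L, pd (0,0,1) f p = 0 := by
  have hcont : Continuous (pd ((0:ℝ),(0:ℝ),(1:ℝ)) f) := (pd_contDiff hf (0,0,1)).continuous
  have hinner : ∀ x : ℝ, (∫ yz in Icc (0:ℝ) L ×ˢ Icc (0:ℝ) 1, pd (0,0,1) f (x, yz)) = 0 := by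
    intro x
    have hzero : ∀ y : ℝ, ∫ z in Icc (0:ℝ) 1, pd (0,0,1) f (x, y, z) = 0 := by
      intro y
      refine ftc_zero one_pos (f := fun z => f (x, y, z)) (fun z => ?_)
        (hcont.comp (continuous_const.prodMk
          (continuous_const.prodMk continuous_id))) ?_
      · have h1 : HasDerivAt (fun z : ℝ => ((x, y, z) : E3)) (0, 0, 1) z :=
          (hasDerivAt_const z x).prodMk ((hasDerivAt_const z y).prodMk (hasDerivAt_id z))
        exact (hf.differentiable (by simp) (x, y, z)).hasFDerivAt.comp_hasDerivAt z h1
      · simpa using hp.2.2 x y 0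
    have hint2 : IntegrableOn (fun yz : ℝ × ℝ => pd (0,0,1) f (x, yz))
        (Icc (0:ℝ) L ×ˢ Icc (0:ℝ) 1) :=
      ((hcont.comp (continuous_const.prodMk continuous_id)).continuousOn).integrableOn_compact
        (isCompact_Icc.prod isCompact_Icc)
    rw [Measure.volume_eq_prod ℝ ℝ]
    rw [setIntegral_prod _ (by rw [← Measure.volume_eq_prod]; exact hint2)]
    simp only [hzero, integral_zero]
  have hint : IntegrableOn (pd ((0:ℝ),(0:ℝ),(1:ℝ)) f) (Box L) := cont_integrableOn hcont
  rw [Box] at hint ⊢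
  rw [Measure.volume_eq_prod ℝ (ℝ × ℝ)]
  rw [setIntegral_prod _ (by rw [← Measure.volume_eq_prod]; exact hint)]
  simp only [hinner, integral_zero]

/-- Integration by parts from a zero-integral hypothesis. -/
lemma ibp_of_zero {L : ℝ} {f g : E3 → ℝ} (hf : ContDiff ℝ (⊤ : ℕ∞) f) (hg : ContDiff ℝ (⊤ : ℕ∞) g)
    (v : E3)
    (hzero : ∫ p in Box L, pd v (fun q => f q * g q) p = 0) :
    ∫ p in Box L, pd v f p * g p = -∫ p in Box L, f p * pd v g p := by
  have hdf := hf.differentiable (by simp)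
  have hdg := hg.differentiable (by simp)
  have h1 : ∫ p in Box L, (f p * pd v g p + g p * pd v f p) = 0 := by
    rw [← hzero]
    exact setIntegral_congr_fun boxMeas (fun p _ => (pd_mul hdf hdg v p).symm)
  have hint1 : IntegrableOn (fun p => f p * pd v g p) (Box L) :=
    cont_integrableOn (hf.continuous.mul (pd_contDiff hg v).continuous)
  have hint2 : IntegrableOn (fun p => g p * pd v f p) (Box L) :=
    cont_integrableOn (hg.continuous.mul (pd_contDiff hf v).continuous)
  rw [integral_add hint1 hint2] at h1
  have h2 : ∫ p in Box L, pd v f p * g p = ∫ p in Box L, g p * pd v f p := by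
    simp only [mul_comm]
  rw [h2]
  linarith

/-- Differentiation under the integral sign over the box. -/
lemma hasDerivAt_integral_box {L : ℝ} (F F' : ℝ → E3 → ℝ)
    (hF : Continuous (Function.uncurry F)) (hF' : Continuous (Function.uncurry F'))
    (hd : ∀ s p, HasDerivAt (fun σ => F σ p) (F' s p) s) (t : ℝ) :
    HasDerivAt (fun s => ∫ p in Box L, F s p) (∫ p in Box L, F' t p) t := by
  obtain ⟨C, hC⟩ :=
    ((isCompact_Icc (a := t - 1) (b := t + 1)).prod
      (boxCompact (L := L))).exists_bound_of_continuousOn hF'.continuousOn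
  have key := hasDerivAt_integral_of_dominated_loc_of_deriv_le
    (F := F) (F' := F') (x₀ := t) (s := Metric.ball t 1) (bound := fun _ => C)
    (μ := volume.restrict (Box L)) (Metric.ball_mem_nhds t one_pos)
    (Filter.Eventually.of_forall fun s =>
      ((hF.comp (continuous_const.prodMk continuous_id)).aestronglyMeasurable))
    (cont_integrableOn (hF.comp (continuous_const.prodMk continuous_id)))
    ((hF'.comp (continuous_const.prodMk continuous_id)).aestronglyMeasurable)
    ?_ ?_ ?_
  · exact key.2
  · refine (ae_restrict_mem boxMeas).mono fun p hp => fun s hs => ?_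
    have hs' : s ∈ Icc (t - 1) (t + 1) := by
      rw [Real.ball_eq_Ioo] at hs
      exact Ioo_subset_Icc_self hs
    exact hC (s, p) (mem_prod.2 ⟨hs', hp⟩)
  · exact integrableOn_const (boxCompact.measure_lt_top.ne)
  · exact Filter.Eventually.of_forall fun p s _ => hd s p

-- slice lemmas
variable {u : ℝ → E3 → ℝ}

lemma slice_contDiff (hu : ContDiff ℝ (⊤ : ℕ∞) (Function.uncurry u)) (t : ℝ) :
    ContDiff ℝ (⊤ : ℕ∞) (u t) :=
  hu.comp (contDiff_const.prodMk contDiff_id)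

lemma pd_slice (hu : ContDiff ℝ (⊤ : ℕ∞) (Function.uncurry u)) (t : ℝ) (p : E3) (v : E3) :
    pd v (u t) p = fderiv ℝ (Function.uncurry u) (t, p) ((0 : ℝ), v) := by
  have h : HasFDerivAt (u t)
      ((fderiv ℝ (Function.uncurry u) (t, p)).comp
        ((0 : E3 →L[ℝ] ℝ).prod (ContinuousLinearMap.id ℝ E3))) p := by
    have h0 : HasFDerivAt (fun q : E3 => ((t, q) : ℝ × E3))
        ((0 : E3 →L[ℝ] ℝ).prod (ContinuousLinearMap.id ℝ E3)) p :=
      (hasFDerivAt_const t p).prodMk (hasFDerivAt_id p)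
    exact ((hu.differentiable (by simp) (t, p)).hasFDerivAt.comp p h0 :)
  rw [pd, h.fderiv]
  rfl

lemma hasDerivAt_slice (hu : ContDiff ℝ (⊤ : ℕ∞) (Function.uncurry u)) (s : ℝ) (p : E3) :
    HasDerivAt (fun σ => u σ p)
      (fderiv ℝ (Function.uncurry u) (s, p) ((1 : ℝ), (0 : E3))) s := by
  have h0 : HasDerivAt (fun σ : ℝ => ((σ, p) : ℝ × E3)) ((1 : ℝ), (0 : E3)) s :=
    (hasDerivAt_id s).prodMk (hasDerivAt_const s p)
  exact ((hu.differentiable (by simp) (s, p)).hasFDerivAt.comp_hasDerivAt s h0 :)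

lemma fderiv_apply_contDiff (hu : ContDiff ℝ (⊤ : ℕ∞) (Function.uncurry u)) (v : ℝ × E3) :
    ContDiff ℝ (⊤ : ℕ∞) (fun q : ℝ × E3 => fderiv ℝ (Function.uncurry u) q v) :=
  (hu.fderiv_right (by simp)).clm_apply contDiff_const

/-- Young-type pointwise inequality. -/
lemma young {ε : ℝ} (hε : 0 < ε) (a b c d : ℝ) :
    -2 * (a * b + c * d) ≤ ε^2 * (a^2 + c^2) + (1/ε^2) * (b^2 + d^2) := by
  have h2 : (0:ℝ) < ε^2 := by positivity
  rw [← mul_le_mul_iff_right₀ h2]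
  have hne : ε^2 ≠ 0 := ne_of_gt h2
  field_simp
  nlinarith [sq_nonneg (ε^2 * a + b), sq_nonneg (ε^2 * c + d)]

end HM13


open HM13 in
/-- Vorticity differential inequality:
d/dt ‖ω‖₂² + (2/Re)‖∇_h ω‖₂² + ε²‖u_z‖₂² ≤ (1/ε²)‖∇_h w‖₂². -/
theorem stmt13 (L Re ε : ℝ) (hL : 0 < L) (hRe : 0 < Re) (hε : 0 < ε)
    (u1 u2 w ψ : ℝ → ℝ × ℝ × ℝ → ℝ) (hsol : IsSol L Re ε u1 u2 w ψ) (t : ℝ) :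
    deriv (fun s => ∫ p in Box L, (omg u1 u2 s p) ^ 2) t
      + (2/Re) * (∫ p in Box L,
          (pdx (omg u1 u2 t) p) ^ 2 + (pdy (omg u1 u2 t) p) ^ 2)
      + ε ^ 2 * (∫ p in Box L, (pdz (u1 t) p) ^ 2 + (pdz (u2 t) p) ^ 2)
      ≤ (1/ε ^ 2) * ∫ p in Box L, (pdx (w t) p) ^ 2 + (pdy (w t) p) ^ 2 := by
  obtain ⟨hu1, hu2, hw, hψ, hper, hdiv, hu1ψ, hu2ψ, _hmean, _hweq, hωeq⟩ := hsol
  -- smoothness of time slices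
  have hU1 : ContDiff ℝ (⊤ : ℕ∞) (u1 t) := slice_contDiff hu1 t
  have hU2 : ContDiff ℝ (⊤ : ℕ∞) (u2 t) := slice_contDiff hu2 t
  have hWsm : ContDiff ℝ (⊤ : ℕ∞) (w t) := slice_contDiff hw t
  have hΨsm : ContDiff ℝ (⊤ : ℕ∞) (ψ t) := slice_contDiff hψ t
  have hωsm : ContDiff ℝ (⊤ : ℕ∞) (omg u1 u2 t) :=
    (pd_contDiff hU2 (1,0,0)).sub (pd_contDiff hU1 (0,1,0))
  -- periodicity
  have hperu1 := (hper t).1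
  have hperu2 := (hper t).2.1
  have hperW := (hper t).2.2.1
  have hperΨ := (hper t).2.2.2
  have hωper : Per L (omg u1 u2 t) :=
    per_sub (per_pd (hU2.differentiable (by simp)) hperu2 (1,0,0))
      (per_pd (hU1.differentiable (by simp)) hperu1 (0,1,0))
  -- the vorticity as a jointly smooth function
  set Fu : ℝ × E3 → ℝ := fun q =>
    fderiv ℝ (Function.uncurry u2) q ((0:ℝ), (1,0,0))
      - fderiv ℝ (Function.uncurry u1) q ((0:ℝ), (0,1,0)) with hFudef
  have hGsm : ContDiff ℝ (⊤ : ℕ∞) Fu :=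
    (fderiv_apply_contDiff hu2 _).sub (fderiv_apply_contDiff hu1 _)
  have hGeq : ∀ s p, omg u1 u2 s p = Fu (s, p) := by
    intro s p
    rw [omg, hFudef]
    rw [pdx_eq, pdy_eq, pd_slice hu2 s p, pd_slice hu1 s p]
  set Gt : ℝ × E3 → ℝ := fun q => fderiv ℝ Fu q ((1:ℝ), (0:E3)) with hGtdef
  have hGt_cd : ContDiff ℝ (⊤ : ℕ∞) Gt := (hGsm.fderiv_right (by simp)).clm_apply contDiff_const
  have hds : ∀ s p, HasDerivAt (fun σ => Fu (σ, p)) (Gt (s, p)) s := fun s p =>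
    hasDerivAt_slice (u := fun s p => Fu (s, p)) hGsm s p
  -- derivative under the integral
  have hFcont : Continuous (Function.uncurry fun s p => Fu (s, p) ^ 2) :=
    hGsm.continuous.pow 2
  have hF'cont : Continuous (Function.uncurry fun s p => 2 * Fu (s, p) * Gt (s, p)) :=
    (continuous_const.mul hGsm.continuous).mul hGt_cd.continuous
  have hdF : ∀ s p, HasDerivAt (fun σ => Fu (σ, p) ^ 2) (2 * Fu (s, p) * Gt (s, p)) s := by
    intro s p
    have h := (hds s p).fun_pow 2
    simpa using h
  have hkey := hasDerivAt_integral_box (L := L) _ _ hFcont hF'cont hdF t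
  have hfun : (fun s => ∫ p in Box L, (omg u1 u2 s p) ^ 2)
      = fun s => ∫ p in Box L, Fu (s, p) ^ 2 := by
    funext s
    simp only [hGeq]
  have hderiv_val : deriv (fun s => ∫ p in Box L, (omg u1 u2 s p) ^ 2) t
      = ∫ p in Box L, 2 * Fu (t, p) * Gt (t, p) := by
    rw [hfun]
    exact hkey.deriv
  -- the PDE, pointwise
  have hGt_eq : ∀ p, Gt (t, p) = deriv (fun s => omg u1 u2 s p) t := by
    intro p
    have h1 : (fun s => omg u1 u2 s p) = fun s => Fu (s, p) := funext fun s => hGeq s p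
    rw [h1]
    exact ((hds t p).deriv).symm
  have hpde : ∀ p, 2 * Fu (t, p) * Gt (t, p)
      = -(2 * omg u1 u2 t p * (u1 t p * pd (1,0,0) (omg u1 u2 t) p
            + u2 t p * pd (0,1,0) (omg u1 u2 t) p))
        + 2 * omg u1 u2 t p * pd (0,0,1) (w t) p
        + (2/Re) * (omg u1 u2 t p * (pd (1,0,0) (pd (1,0,0) (omg u1 u2 t)) p
            + pd (0,1,0) (pd (0,1,0) (omg u1 u2 t)) p))
        + 2 * ε ^ 2 * (omg u1 u2 t p * pd (0,0,1) (pd (0,0,1) (ψ t)) p) := by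
    intro p
    have h := hωeq t p
    simp only [pdx_eq, pdy_eq, pdz_eq] at h
    rw [← hGt_eq p] at h
    rw [← hGeq t p]
    linear_combination (2 * omg u1 u2 t p) * h
  -- integrability of the pieces
  have cω : Continuous (omg u1 u2 t) := hωsm.continuous
  have hintA : IntegrableOn (fun p => -(2 * omg u1 u2 t p * (u1 t p * pd (1,0,0) (omg u1 u2 t) p
      + u2 t p * pd (0,1,0) (omg u1 u2 t) p))) (Box L) :=
    cont_integrableOn (((continuous_const.mul cω).mul
      ((hU1.continuous.mul (pd_contDiff hωsm _).continuous).add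
        (hU2.continuous.mul (pd_contDiff hωsm _).continuous))).neg)
  have hintB : IntegrableOn (fun p => 2 * omg u1 u2 t p * pd (0,0,1) (w t) p) (Box L) :=
    cont_integrableOn ((continuous_const.mul cω).mul (pd_contDiff hWsm _).continuous)
  have hintC : IntegrableOn (fun p => (2/Re) * (omg u1 u2 t p *
      (pd (1,0,0) (pd (1,0,0) (omg u1 u2 t)) p
        + pd (0,1,0) (pd (0,1,0) (omg u1 u2 t)) p))) (Box L) :=
    cont_integrableOn (continuous_const.mul (cω.mul
      ((pd_contDiff (pd_contDiff hωsm _) _).continuous.add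
        (pd_contDiff (pd_contDiff hωsm _) _).continuous)))
  have hintD : IntegrableOn (fun p => 2 * ε ^ 2 * (omg u1 u2 t p *
      pd (0,0,1) (pd (0,0,1) (ψ t)) p)) (Box L) :=
    cont_integrableOn (continuous_const.mul (cω.mul
      (pd_contDiff (pd_contDiff hΨsm _) _).continuous))
  have hdecomp : ∫ p in Box L, 2 * Fu (t, p) * Gt (t, p)
      = (∫ p in Box L, -(2 * omg u1 u2 t p * (u1 t p * pd (1,0,0) (omg u1 u2 t) p
            + u2 t p * pd (0,1,0) (omg u1 u2 t) p)))
        + (∫ p in Box L, 2 * omg u1 u2 t p * pd (0,0,1) (w t) p)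
        + (∫ p in Box L, (2/Re) * (omg u1 u2 t p * (pd (1,0,0) (pd (1,0,0) (omg u1 u2 t)) p
            + pd (0,1,0) (pd (0,1,0) (omg u1 u2 t)) p)))
        + (∫ p in Box L, 2 * ε ^ 2 * (omg u1 u2 t p * pd (0,0,1) (pd (0,0,1) (ψ t)) p)) := by
    have s1 : (∫ p in Box L, (-(2 * omg u1 u2 t p * (u1 t p * pd (1,0,0) (omg u1 u2 t) p
            + u2 t p * pd (0,1,0) (omg u1 u2 t) p))
        + 2 * omg u1 u2 t p * pd (0,0,1) (w t) p)) = (∫ p in Box L, -(2 * omg u1 u2 t p * (u1 t p * pd (1,0,0) (omg u1 u2 t) p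
            + u2 t p * pd (0,1,0) (omg u1 u2 t) p)))
        + ∫ p in Box L, 2 * omg u1 u2 t p * pd (0,0,1) (w t) p := integral_add hintA hintB
    have s2 : (∫ p in Box L, (-(2 * omg u1 u2 t p * (u1 t p * pd (1,0,0) (omg u1 u2 t) p
            + u2 t p * pd (0,1,0) (omg u1 u2 t) p))
        + 2 * omg u1 u2 t p * pd (0,0,1) (w t) p
        + (2/Re) * (omg u1 u2 t p * (pd (1,0,0) (pd (1,0,0) (omg u1 u2 t)) p
            + pd (0,1,0) (pd (0,1,0) (omg u1 u2 t)) p)))) = (∫ p in Box L, (-(2 * omg u1 u2 t p * (u1 t p * pd (1,0,0) (omg u1 u2 t) p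
            + u2 t p * pd (0,1,0) (omg u1 u2 t) p))
        + 2 * omg u1 u2 t p * pd (0,0,1) (w t) p))
        + ∫ p in Box L, (2/Re) * (omg u1 u2 t p * (pd (1,0,0) (pd (1,0,0) (omg u1 u2 t)) p
            + pd (0,1,0) (pd (0,1,0) (omg u1 u2 t)) p)) := integral_add (hintA.add hintB) hintC
    have s3 : (∫ p in Box L, (-(2 * omg u1 u2 t p * (u1 t p * pd (1,0,0) (omg u1 u2 t) p
            + u2 t p * pd (0,1,0) (omg u1 u2 t) p))
        + 2 * omg u1 u2 t p * pd (0,0,1) (w t) p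
        + (2/Re) * (omg u1 u2 t p * (pd (1,0,0) (pd (1,0,0) (omg u1 u2 t)) p
            + pd (0,1,0) (pd (0,1,0) (omg u1 u2 t)) p))
        + 2 * ε ^ 2 * (omg u1 u2 t p * pd (0,0,1) (pd (0,0,1) (ψ t)) p))) = (∫ p in Box L, (-(2 * omg u1 u2 t p * (u1 t p * pd (1,0,0) (omg u1 u2 t) p
            + u2 t p * pd (0,1,0) (omg u1 u2 t) p))
        + 2 * omg u1 u2 t p * pd (0,0,1) (w t) p
        + (2/Re) * (omg u1 u2 t p * (pd (1,0,0) (pd (1,0,0) (omg u1 u2 t)) p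
            + pd (0,1,0) (pd (0,1,0) (omg u1 u2 t)) p))))
        + ∫ p in Box L, 2 * ε ^ 2 * (omg u1 u2 t p * pd (0,0,1) (pd (0,0,1) (ψ t)) p) := integral_add ((hintA.add hintB).add hintC) hintD
    rw [setIntegral_congr_fun boxMeas (fun p _ => hpde p), s3, s2, s1]
  -- general tools
  have mulcomm : ∀ f g : E3 → ℝ, (∫ p in Box L, f p * g p) = ∫ p in Box L, g p * f p :=
    fun f g => setIntegral_congr_fun boxMeas fun p _ => mul_comm _ _
  have IBPx : ∀ f g : E3 → ℝ, ContDiff ℝ (⊤ : ℕ∞) f → ContDiff ℝ (⊤ : ℕ∞) g → Per L f → Per L g →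
      (∫ p in Box L, pd (1,0,0) f p * g p) = -∫ p in Box L, f p * pd (1,0,0) g p :=
    fun f g hf hg pf pg =>
      ibp_of_zero hf hg _ (integral_pdx_zero hL (hf.mul hg) (per_mul pf pg))
  have IBPy : ∀ f g : E3 → ℝ, ContDiff ℝ (⊤ : ℕ∞) f → ContDiff ℝ (⊤ : ℕ∞) g → Per L f → Per L g →
      (∫ p in Box L, pd (0,1,0) f p * g p) = -∫ p in Box L, f p * pd (0,1,0) g p :=
    fun f g hf hg pf pg =>
      ibp_of_zero hf hg _ (integral_pdy_zero hL (hf.mul hg) (per_mul pf pg))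
  have IBPz : ∀ f g : E3 → ℝ, ContDiff ℝ (⊤ : ℕ∞) f → ContDiff ℝ (⊤ : ℕ∞) g → Per L f → Per L g →
      (∫ p in Box L, pd (0,0,1) f p * g p) = -∫ p in Box L, f p * pd (0,0,1) g p :=
    fun f g hf hg pf pg =>
      ibp_of_zero hf hg _ (integral_pdz_zero (hf.mul hg) (per_mul pf pg))
  -- stream-function facts (shared by Terms 2 and 4)
  have hdΨ := hΨsm.differentiable (by simp)
  have hdW := hWsm.differentiable (by simp)
  have sΨ1 : ContDiff ℝ (⊤ : ℕ∞) (pd (1,0,0) (ψ t)) := pd_contDiff hΨsm _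
  have sΨ2 : ContDiff ℝ (⊤ : ℕ∞) (pd (0,1,0) (ψ t)) := pd_contDiff hΨsm _
  have sΨ3 : ContDiff ℝ (⊤ : ℕ∞) (pd (0,0,1) (ψ t)) := pd_contDiff hΨsm _
  have pΨ1 : Per L (pd (1,0,0) (ψ t)) := per_pd hdΨ hperΨ _
  have pΨ2 : Per L (pd (0,1,0) (ψ t)) := per_pd hdΨ hperΨ _
  have pΨ3 : Per L (pd (0,0,1) (ψ t)) := per_pd hdΨ hperΨ _
  have hu1t : u1 t = fun q => pd (0,1,0) (ψ t) q := funext fun q => hu1ψ t q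
  have hu2t : u2 t = fun q => -(pd (1,0,0) (ψ t) q) := funext fun q => hu2ψ t q
  have homega : ∀ p, omg u1 u2 t p
      = -(pd (1,0,0) (pd (1,0,0) (ψ t)) p) - pd (0,1,0) (pd (0,1,0) (ψ t)) p := by
    intro p
    show pdx (u2 t) p - pdy (u1 t) p = _
    rw [pdx_eq, pdy_eq, hu2t, hu1t, pd_neg]
  have hz1 : ∀ p, pd (0,0,1) (u1 t) p = pd (0,0,1) (pd (0,1,0) (ψ t)) p := fun p => by
    rw [hu1t]
  have hz2 : ∀ p, pd (0,0,1) (u2 t) p = -(pd (0,0,1) (pd (1,0,0) (ψ t)) p) := fun p => by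
    rw [hu2t, pd_neg]
  have c1 : pd (0,0,1) (pd (1,0,0) (ψ t)) = pd (1,0,0) (pd (0,0,1) (ψ t)) :=
    funext fun p => pd_comm hΨsm _ _ p
  have c2 : pd (0,0,1) (pd (0,1,0) (ψ t)) = pd (0,1,0) (pd (0,0,1) (ψ t)) :=
    funext fun p => pd_comm hΨsm _ _ p
  have c13 : ∀ p, pd (1,0,0) (pd (0,0,1) (pd (0,0,1) (ψ t))) p
      = pd (0,0,1) (pd (0,0,1) (pd (1,0,0) (ψ t))) p := fun p => by
    rw [pd_comm sΨ3 (1,0,0) (0,0,1) p, ← c1]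
  have c23 : ∀ p, pd (0,1,0) (pd (0,0,1) (pd (0,0,1) (ψ t))) p
      = pd (0,0,1) (pd (0,0,1) (pd (0,1,0) (ψ t))) p := fun p => by
    rw [pd_comm sΨ3 (0,1,0) (0,0,1) p, ← c2]
  -- key integration-by-parts identities for the ψ_zz term
  have key1 : (∫ p in Box L, pd (1,0,0) (pd (1,0,0) (ψ t)) p * pd (0,0,1) (pd (0,0,1) (ψ t)) p)
      = ∫ p in Box L, pd (0,0,1) (pd (1,0,0) (ψ t)) p * pd (0,0,1) (pd (1,0,0) (ψ t)) p := by
    have h1 := IBPx (pd (1,0,0) (ψ t)) (pd (0,0,1) (pd (0,0,1) (ψ t))) sΨ1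
      (pd_contDiff sΨ3 _) pΨ1 (per_pd (sΨ3.differentiable (by simp)) pΨ3 _)
    have e1 : (∫ p in Box L, pd (1,0,0) (ψ t) p * pd (1,0,0) (pd (0,0,1) (pd (0,0,1) (ψ t))) p)
        = ∫ p in Box L, pd (1,0,0) (ψ t) p * pd (0,0,1) (pd (0,0,1) (pd (1,0,0) (ψ t))) p :=
      setIntegral_congr_fun boxMeas fun p _ => by rw [c13 p]
    have h2 := IBPz (pd (1,0,0) (ψ t)) (pd (0,0,1) (pd (1,0,0) (ψ t))) sΨ1
      (pd_contDiff sΨ1 _) pΨ1 (per_pd (sΨ1.differentiable (by simp)) pΨ1 _)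
    linarith [h1, e1, h2]
  have key2 : (∫ p in Box L, pd (0,1,0) (pd (0,1,0) (ψ t)) p * pd (0,0,1) (pd (0,0,1) (ψ t)) p)
      = ∫ p in Box L, pd (0,0,1) (pd (0,1,0) (ψ t)) p * pd (0,0,1) (pd (0,1,0) (ψ t)) p := by
    have h1 := IBPy (pd (0,1,0) (ψ t)) (pd (0,0,1) (pd (0,0,1) (ψ t))) sΨ2
      (pd_contDiff sΨ3 _) pΨ2 (per_pd (sΨ3.differentiable (by simp)) pΨ3 _)
    have e1 : (∫ p in Box L, pd (0,1,0) (ψ t) p * pd (0,1,0) (pd (0,0,1) (pd (0,0,1) (ψ t))) p)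
        = ∫ p in Box L, pd (0,1,0) (ψ t) p * pd (0,0,1) (pd (0,0,1) (pd (0,1,0) (ψ t))) p :=
      setIntegral_congr_fun boxMeas fun p _ => by rw [c23 p]
    have h2 := IBPz (pd (0,1,0) (ψ t)) (pd (0,0,1) (pd (0,1,0) (ψ t))) sΨ2
      (pd_contDiff sΨ2 _) pΨ2 (per_pd (sΨ2.differentiable (by simp)) pΨ2 _)
    linarith [h1, e1, h2]
  have imul1 : IntegrableOn (fun p => pd (0,0,1) (pd (1,0,0) (ψ t)) p
      * pd (0,0,1) (pd (1,0,0) (ψ t)) p) (Box L) :=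
    cont_integrableOn ((pd_contDiff sΨ1 _).continuous.mul (pd_contDiff sΨ1 _).continuous)
  have imul2 : IntegrableOn (fun p => pd (0,0,1) (pd (0,1,0) (ψ t)) p
      * pd (0,0,1) (pd (0,1,0) (ψ t)) p) (Box L) :=
    cont_integrableOn ((pd_contDiff sΨ2 _).continuous.mul (pd_contDiff sΨ2 _).continuous)
  have efin : (∫ p in Box L, (pd (0,0,1) (u1 t) p) ^ 2 + (pd (0,0,1) (u2 t) p) ^ 2)
      = (∫ p in Box L, pd (0,0,1) (pd (1,0,0) (ψ t)) p * pd (0,0,1) (pd (1,0,0) (ψ t)) p)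
        + ∫ p in Box L, pd (0,0,1) (pd (0,1,0) (ψ t)) p * pd (0,0,1) (pd (0,1,0) (ψ t)) p := by
    rw [← integral_add imul1 imul2]
    exact setIntegral_congr_fun boxMeas fun p _ => by rw [hz1 p, hz2 p]; ring
  -- Term 1: transport term vanishes
  have hT1 : (∫ p in Box L, -(2 * omg u1 u2 t p * (u1 t p * pd (1,0,0) (omg u1 u2 t) p
      + u2 t p * pd (0,1,0) (omg u1 u2 t) p))) = 0 := by
    have hdiv' : ∀ p, pd (1,0,0) (u1 t) p + pd (0,1,0) (u2 t) p = 0 := fun p => by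
      have h := hdiv t p
      simpa only [pdx_eq, pdy_eq] using h
    have hdω := hωsm.differentiable (by simp)
    have hptw : ∀ p : E3,
        -(2 * omg u1 u2 t p * (u1 t p * pd (1,0,0) (omg u1 u2 t) p
            + u2 t p * pd (0,1,0) (omg u1 u2 t) p))
        = -(pd (1,0,0) (fun q => u1 t q * (omg u1 u2 t q * omg u1 u2 t q)) p
            + pd (0,1,0) (fun q => u2 t q * (omg u1 u2 t q * omg u1 u2 t q)) p) := by
      intro p
      rw [pd_mul (hU1.differentiable (by simp)) ((hωsm.mul hωsm).differentiable (by simp)),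
        pd_mul (hU2.differentiable (by simp)) ((hωsm.mul hωsm).differentiable (by simp)),
        pd_mul hdω hdω, pd_mul hdω hdω]
      linear_combination (omg u1 u2 t p * omg u1 u2 t p) * hdiv' p
    rw [setIntegral_congr_fun boxMeas (fun p _ => hptw p)]
    have hi1 : IntegrableOn
        (fun p => pd (1,0,0) (fun q => u1 t q * (omg u1 u2 t q * omg u1 u2 t q)) p)
        (Box L) :=
      cont_integrableOn (pd_contDiff (hU1.mul (hωsm.mul hωsm)) _).continuous
    have hi2 : IntegrableOn
        (fun p => pd (0,1,0) (fun q => u2 t q * (omg u1 u2 t q * omg u1 u2 t q)) p)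
        (Box L) :=
      cont_integrableOn (pd_contDiff (hU2.mul (hωsm.mul hωsm)) _).continuous
    rw [integral_neg, integral_add hi1 hi2,
      integral_pdx_zero hL (hU1.mul (hωsm.mul hωsm)) (per_mul hperu1 (per_mul hωper hωper)),
      integral_pdy_zero hL (hU2.mul (hωsm.mul hωsm)) (per_mul hperu2 (per_mul hωper hωper))]
    simp
  -- Term 3: viscous term
  have hT3 : (∫ p in Box L, (2/Re) * (omg u1 u2 t p * (pd (1,0,0) (pd (1,0,0) (omg u1 u2 t)) p
      + pd (0,1,0) (pd (0,1,0) (omg u1 u2 t)) p)))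
      = -((2/Re) * ∫ p in Box L, (pd (1,0,0) (omg u1 u2 t) p) ^ 2
          + (pd (0,1,0) (omg u1 u2 t) p) ^ 2) := by
    have hdω := hωsm.differentiable (by simp)
    have ibp1 := IBPx (pd (1,0,0) (omg u1 u2 t)) (omg u1 u2 t)
      (pd_contDiff hωsm _) hωsm (per_pd hdω hωper _) hωper
    have ibp2 := IBPy (pd (0,1,0) (omg u1 u2 t)) (omg u1 u2 t)
      (pd_contDiff hωsm _) hωsm (per_pd hdω hωper _) hωper
    have i11 : IntegrableOn
        (fun p => omg u1 u2 t p * pd (1,0,0) (pd (1,0,0) (omg u1 u2 t)) p) (Box L) :=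
      cont_integrableOn (cω.mul (pd_contDiff (pd_contDiff hωsm _) _).continuous)
    have i22 : IntegrableOn
        (fun p => omg u1 u2 t p * pd (0,1,0) (pd (0,1,0) (omg u1 u2 t)) p) (Box L) :=
      cont_integrableOn (cω.mul (pd_contDiff (pd_contDiff hωsm _) _).continuous)
    have isq1 : IntegrableOn (fun p => (pd (1,0,0) (omg u1 u2 t) p) ^ 2) (Box L) :=
      cont_integrableOn ((pd_contDiff hωsm _).continuous.pow 2)
    have isq2 : IntegrableOn (fun p => (pd (0,1,0) (omg u1 u2 t) p) ^ 2) (Box L) :=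
      cont_integrableOn ((pd_contDiff hωsm _).continuous.pow 2)
    have esq1 : (∫ p in Box L, pd (1,0,0) (omg u1 u2 t) p * pd (1,0,0) (omg u1 u2 t) p)
        = ∫ p in Box L, (pd (1,0,0) (omg u1 u2 t) p) ^ 2 :=
      setIntegral_congr_fun boxMeas fun p _ => (sq (pd (1,0,0) (omg u1 u2 t) p)).symm ▸ by ring
    have esq2 : (∫ p in Box L, pd (0,1,0) (omg u1 u2 t) p * pd (0,1,0) (omg u1 u2 t) p)
        = ∫ p in Box L, (pd (0,1,0) (omg u1 u2 t) p) ^ 2 :=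
      setIntegral_congr_fun boxMeas fun p _ => by ring
    calc (∫ p in Box L, (2/Re) * (omg u1 u2 t p * (pd (1,0,0) (pd (1,0,0) (omg u1 u2 t)) p
            + pd (0,1,0) (pd (0,1,0) (omg u1 u2 t)) p)))
        = (2/Re) * ∫ p in Box L, (omg u1 u2 t p * pd (1,0,0) (pd (1,0,0) (omg u1 u2 t)) p
            + omg u1 u2 t p * pd (0,1,0) (pd (0,1,0) (omg u1 u2 t)) p) := by
          rw [integral_const_mul]
          congr 1
          exact setIntegral_congr_fun boxMeas fun p _ => by ring
      _ = (2/Re) * ((∫ p in Box L, omg u1 u2 t p * pd (1,0,0) (pd (1,0,0) (omg u1 u2 t)) p)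
            + ∫ p in Box L, omg u1 u2 t p * pd (0,1,0) (pd (0,1,0) (omg u1 u2 t)) p) := by
          rw [integral_add i11 i22]
      _ = (2/Re) * ((∫ p in Box L, pd (1,0,0) (pd (1,0,0) (omg u1 u2 t)) p * omg u1 u2 t p)
            + ∫ p in Box L, pd (0,1,0) (pd (0,1,0) (omg u1 u2 t)) p * omg u1 u2 t p) := by
          rw [mulcomm (omg u1 u2 t) (pd (1,0,0) (pd (1,0,0) (omg u1 u2 t))),
            mulcomm (omg u1 u2 t) (pd (0,1,0) (pd (0,1,0) (omg u1 u2 t)))]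
      _ = (2/Re) * (-(∫ p in Box L, pd (1,0,0) (omg u1 u2 t) p * pd (1,0,0) (omg u1 u2 t) p)
            + -(∫ p in Box L, pd (0,1,0) (omg u1 u2 t) p * pd (0,1,0) (omg u1 u2 t) p)) := by
          rw [ibp1, ibp2]
      _ = -((2/Re) * ∫ p in Box L, (pd (1,0,0) (omg u1 u2 t) p) ^ 2
            + (pd (0,1,0) (omg u1 u2 t) p) ^ 2) := by
          rw [esq1, esq2, integral_add isq1 isq2]
          ring
  -- Term 4
  have hT4 : (∫ p in Box L, 2 * ε ^ 2 * (omg u1 u2 t p * pd (0,0,1) (pd (0,0,1) (ψ t)) p))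
      = -(2 * ε ^ 2 * ∫ p in Box L, (pd (0,0,1) (u1 t) p) ^ 2
          + (pd (0,0,1) (u2 t) p) ^ 2) := by
    have iA : IntegrableOn (fun p => pd (1,0,0) (pd (1,0,0) (ψ t)) p
        * pd (0,0,1) (pd (0,0,1) (ψ t)) p) (Box L) :=
      cont_integrableOn ((pd_contDiff sΨ1 _).continuous.mul (pd_contDiff sΨ3 _).continuous)
    have iB : IntegrableOn (fun p => pd (0,1,0) (pd (0,1,0) (ψ t)) p
        * pd (0,0,1) (pd (0,0,1) (ψ t)) p) (Box L) :=
      cont_integrableOn ((pd_contDiff sΨ2 _).continuous.mul (pd_contDiff sΨ3 _).continuous)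
    have hX : (∫ p in Box L, omg u1 u2 t p * pd (0,0,1) (pd (0,0,1) (ψ t)) p)
        = -((∫ p in Box L, pd (0,0,1) (pd (1,0,0) (ψ t)) p * pd (0,0,1) (pd (1,0,0) (ψ t)) p)
          + ∫ p in Box L, pd (0,0,1) (pd (0,1,0) (ψ t)) p * pd (0,0,1) (pd (0,1,0) (ψ t)) p) := by
      have e0 : (∫ p in Box L, omg u1 u2 t p * pd (0,0,1) (pd (0,0,1) (ψ t)) p)
          = ∫ p in Box L, (-(pd (1,0,0) (pd (1,0,0) (ψ t)) p * pd (0,0,1) (pd (0,0,1) (ψ t)) p)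
              - pd (0,1,0) (pd (0,1,0) (ψ t)) p * pd (0,0,1) (pd (0,0,1) (ψ t)) p) :=
        setIntegral_congr_fun boxMeas fun p _ => by rw [homega p]; ring
      have iAneg : IntegrableOn (fun p => -(pd (1,0,0) (pd (1,0,0) (ψ t)) p
          * pd (0,0,1) (pd (0,0,1) (ψ t)) p)) (Box L) :=
        cont_integrableOn ((pd_contDiff sΨ1 _).continuous.mul
          (pd_contDiff sΨ3 _).continuous).neg
      rw [e0, integral_sub iAneg iB, integral_neg, key1, key2]
      ring
    rw [show (fun p : E3 => 2 * ε ^ 2 * (omg u1 u2 t p * pd (0,0,1) (pd (0,0,1) (ψ t)) p))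
        = fun p : E3 => (2 * ε ^ 2) * (omg u1 u2 t p * pd (0,0,1) (pd (0,0,1) (ψ t)) p)
        from rfl, integral_const_mul, hX, efin]
    ring
  -- Term 2
  have hT2 : (∫ p in Box L, 2 * omg u1 u2 t p * pd (0,0,1) (w t) p)
      ≤ ε ^ 2 * (∫ p in Box L, (pd (0,0,1) (u1 t) p) ^ 2 + (pd (0,0,1) (u2 t) p) ^ 2)
        + (1/ε ^ 2) * ∫ p in Box L, (pd (1,0,0) (w t) p) ^ 2 + (pd (0,1,0) (w t) p) ^ 2 := by
    have sW1 : ContDiff ℝ (⊤ : ℕ∞) (pd (1,0,0) (w t)) := pd_contDiff hWsm _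
    have sW2 : ContDiff ℝ (⊤ : ℕ∞) (pd (0,1,0) (w t)) := pd_contDiff hWsm _
    have sW3 : ContDiff ℝ (⊤ : ℕ∞) (pd (0,0,1) (w t)) := pd_contDiff hWsm _
    have pW1 : Per L (pd (1,0,0) (w t)) := per_pd hdW hperW _
    have pW2 : Per L (pd (0,1,0) (w t)) := per_pd hdW hperW _
    have pW3 : Per L (pd (0,0,1) (w t)) := per_pd hdW hperW _
    -- IBP to move everything onto first derivatives
    have keyw1 : (∫ p in Box L, pd (1,0,0) (pd (1,0,0) (ψ t)) p * pd (0,0,1) (w t) p)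
        = ∫ p in Box L, pd (0,0,1) (pd (1,0,0) (ψ t)) p * pd (1,0,0) (w t) p := by
      have h1 := IBPx (pd (1,0,0) (ψ t)) (pd (0,0,1) (w t)) sΨ1 sW3 pΨ1 pW3
      have e1 : (∫ p in Box L, pd (1,0,0) (ψ t) p * pd (1,0,0) (pd (0,0,1) (w t)) p)
          = ∫ p in Box L, pd (1,0,0) (ψ t) p * pd (0,0,1) (pd (1,0,0) (w t)) p :=
        setIntegral_congr_fun boxMeas fun p _ => by rw [pd_comm hWsm (1,0,0) (0,0,1) p]
      have h2 := IBPz (pd (1,0,0) (ψ t)) (pd (1,0,0) (w t)) sΨ1 sW1 pΨ1 pW1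
      linarith [h1, e1, h2]
    have keyw2 : (∫ p in Box L, pd (0,1,0) (pd (0,1,0) (ψ t)) p * pd (0,0,1) (w t) p)
        = ∫ p in Box L, pd (0,0,1) (pd (0,1,0) (ψ t)) p * pd (0,1,0) (w t) p := by
      have h1 := IBPy (pd (0,1,0) (ψ t)) (pd (0,0,1) (w t)) sΨ2 sW3 pΨ2 pW3
      have e1 : (∫ p in Box L, pd (0,1,0) (ψ t) p * pd (0,1,0) (pd (0,0,1) (w t)) p)
          = ∫ p in Box L, pd (0,1,0) (ψ t) p * pd (0,0,1) (pd (0,1,0) (w t)) p :=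
        setIntegral_congr_fun boxMeas fun p _ => by rw [pd_comm hWsm (0,1,0) (0,0,1) p]
      have h2 := IBPz (pd (0,1,0) (ψ t)) (pd (0,1,0) (w t)) sΨ2 sW2 pΨ2 pW2
      linarith [h1, e1, h2]
    -- integrabilities
    have iA : IntegrableOn (fun p => pd (1,0,0) (pd (1,0,0) (ψ t)) p * pd (0,0,1) (w t) p)
        (Box L) := cont_integrableOn ((pd_contDiff sΨ1 _).continuous.mul sW3.continuous)
    have iB : IntegrableOn (fun p => pd (0,1,0) (pd (0,1,0) (ψ t)) p * pd (0,0,1) (w t) p)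
        (Box L) := cont_integrableOn ((pd_contDiff sΨ2 _).continuous.mul sW3.continuous)
    have iab : IntegrableOn (fun p => pd (0,0,1) (pd (1,0,0) (ψ t)) p * pd (1,0,0) (w t) p)
        (Box L) := cont_integrableOn ((pd_contDiff sΨ1 _).continuous.mul sW1.continuous)
    have icd : IntegrableOn (fun p => pd (0,0,1) (pd (0,1,0) (ψ t)) p * pd (0,1,0) (w t) p)
        (Box L) := cont_integrableOn ((pd_contDiff sΨ2 _).continuous.mul sW2.continuous)
    have iL : IntegrableOn (fun p => (-2 : ℝ) * (pd (0,0,1) (pd (1,0,0) (ψ t)) p * pd (1,0,0) (w t) p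
        + pd (0,0,1) (pd (0,1,0) (ψ t)) p * pd (0,1,0) (w t) p)) (Box L) :=
      cont_integrableOn (continuous_const.mul
        (((pd_contDiff sΨ1 _).continuous.mul sW1.continuous).add
          ((pd_contDiff sΨ2 _).continuous.mul sW2.continuous)))
    have isq1 : IntegrableOn (fun p => (pd (0,0,1) (pd (1,0,0) (ψ t)) p) ^ 2
        + (pd (0,0,1) (pd (0,1,0) (ψ t)) p) ^ 2) (Box L) :=
      cont_integrableOn (((pd_contDiff sΨ1 _).continuous.pow 2).add
        ((pd_contDiff sΨ2 _).continuous.pow 2))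
    have isq2 : IntegrableOn (fun p => (pd (1,0,0) (w t) p) ^ 2 + (pd (0,1,0) (w t) p) ^ 2)
        (Box L) :=
      cont_integrableOn ((sW1.continuous.pow 2).add (sW2.continuous.pow 2))
    have iR : IntegrableOn (fun p => ε ^ 2 * ((pd (0,0,1) (pd (1,0,0) (ψ t)) p) ^ 2
        + (pd (0,0,1) (pd (0,1,0) (ψ t)) p) ^ 2)
        + (1/ε ^ 2) * ((pd (1,0,0) (w t) p) ^ 2 + (pd (0,1,0) (w t) p) ^ 2)) (Box L) :=
      (isq1.const_mul _).add (isq2.const_mul _)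
    -- B1: LHS equals the IBP'd integral
    have B1 : (∫ p in Box L, 2 * omg u1 u2 t p * pd (0,0,1) (w t) p)
        = -2 * (∫ p in Box L, pd (1,0,0) (pd (1,0,0) (ψ t)) p * pd (0,0,1) (w t) p)
          - 2 * ∫ p in Box L, pd (0,1,0) (pd (0,1,0) (ψ t)) p * pd (0,0,1) (w t) p := by
      have e0 : (∫ p in Box L, 2 * omg u1 u2 t p * pd (0,0,1) (w t) p)
          = ∫ p in Box L, ((-2 : ℝ) * (pd (1,0,0) (pd (1,0,0) (ψ t)) p * pd (0,0,1) (w t) p)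
              - 2 * (pd (0,1,0) (pd (0,1,0) (ψ t)) p * pd (0,0,1) (w t) p)) :=
        setIntegral_congr_fun boxMeas fun p _ => by rw [homega p]; ring
      have iA2 : IntegrableOn (fun p => (-2 : ℝ) * (pd (1,0,0) (pd (1,0,0) (ψ t)) p
          * pd (0,0,1) (w t) p)) (Box L) :=
        cont_integrableOn (continuous_const.mul
          ((pd_contDiff sΨ1 _).continuous.mul sW3.continuous))
      have iB2 : IntegrableOn (fun p => (2 : ℝ) * (pd (0,1,0) (pd (0,1,0) (ψ t)) p
          * pd (0,0,1) (w t) p)) (Box L) :=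
        cont_integrableOn (continuous_const.mul
          ((pd_contDiff sΨ2 _).continuous.mul sW3.continuous))
      rw [e0, integral_sub iA2 iB2, integral_const_mul, integral_const_mul]
    have B2 : (∫ p in Box L, (-2 : ℝ) * (pd (0,0,1) (pd (1,0,0) (ψ t)) p * pd (1,0,0) (w t) p
        + pd (0,0,1) (pd (0,1,0) (ψ t)) p * pd (0,1,0) (w t) p))
        = -2 * (∫ p in Box L, pd (0,0,1) (pd (1,0,0) (ψ t)) p * pd (1,0,0) (w t) p)
          - 2 * ∫ p in Box L, pd (0,0,1) (pd (0,1,0) (ψ t)) p * pd (0,1,0) (w t) p := by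
      rw [integral_const_mul, integral_add iab icd]
      ring
    have hmono : (∫ p in Box L, (-2 : ℝ) * (pd (0,0,1) (pd (1,0,0) (ψ t)) p * pd (1,0,0) (w t) p
        + pd (0,0,1) (pd (0,1,0) (ψ t)) p * pd (0,1,0) (w t) p))
        ≤ ∫ p in Box L, (ε ^ 2 * ((pd (0,0,1) (pd (1,0,0) (ψ t)) p) ^ 2
            + (pd (0,0,1) (pd (0,1,0) (ψ t)) p) ^ 2)
          + (1/ε ^ 2) * ((pd (1,0,0) (w t) p) ^ 2 + (pd (0,1,0) (w t) p) ^ 2)) :=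
      setIntegral_mono_on iL iR boxMeas fun p _ => young hε _ _ _ _
    have B3 : (∫ p in Box L, (ε ^ 2 * ((pd (0,0,1) (pd (1,0,0) (ψ t)) p) ^ 2
            + (pd (0,0,1) (pd (0,1,0) (ψ t)) p) ^ 2)
          + (1/ε ^ 2) * ((pd (1,0,0) (w t) p) ^ 2 + (pd (0,1,0) (w t) p) ^ 2)))
        = ε ^ 2 * (∫ p in Box L, (pd (0,0,1) (pd (1,0,0) (ψ t)) p) ^ 2
            + (pd (0,0,1) (pd (0,1,0) (ψ t)) p) ^ 2)
          + (1/ε ^ 2) * ∫ p in Box L, (pd (1,0,0) (w t) p) ^ 2 + (pd (0,1,0) (w t) p) ^ 2 := by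
      rw [integral_add (isq1.const_mul _) (isq2.const_mul _), integral_const_mul,
        integral_const_mul]
    have B4 : (∫ p in Box L, (pd (0,0,1) (pd (1,0,0) (ψ t)) p) ^ 2
        + (pd (0,0,1) (pd (0,1,0) (ψ t)) p) ^ 2)
        = ∫ p in Box L, (pd (0,0,1) (u1 t) p) ^ 2 + (pd (0,0,1) (u2 t) p) ^ 2 :=
      setIntegral_congr_fun boxMeas fun p _ => by rw [hz1 p, hz2 p]; ring
    have hεsq : (0:ℝ) < ε ^ 2 := by positivity
    nlinarith [B1, B2, B3, B4, hmono, keyw1, keyw2, hεsq]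
  -- assemble
  simp only [pdx_eq, pdy_eq, pdz_eq]
  rw [hderiv_val, hdecomp, hT1, hT3, hT4]
  linarith [hT2]
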